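/- Let k, n ∈ ℕ with k, n ≥ 2, let σ ∈ [2/n, 1] be such that m := 1/σ is a positive integer, and fix i* ∈ {1,…,k}, subsets s_1,…,s_k ⊆ {1,…,n} each of cardinality m, and a subset R ⊆ {1,…,n} with |R| = m and R ∩ s_{i*} = ∅. Define the k-player n-action normal-form game u = (u_1,…,u_k) by: u_{i*}(a) = 1 if a_j ∈ s_j for every j ∈ {1,…,k} and u_{i*}(a) = 0 otherwise; and u_i ≡ 0 for every i ≠ i*. Let π be the strategy profile in which each player j ≠ i* plays the uniform distribution on s_j and player i* plays the uniform distribution on R. Then π is a σ-smooth strategy profile, the expected utility of every player under π is 0, and the unilateral deviation of player i* to the uniform distribution on s_{i*} — which is a σ-smooth strategy — gives player i* expected utility 1. Consequently, for every γ < 1, π is not a γ-approximate σ-smooth Nash equilibrium of u. -/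
import Mathlib


open Finset

/-- A strategy on `n` actions: a nonnegative vector summing to 1. -/
def IsStrategy {n : ℕ} (π : Fin n → ℝ) : Prop :=
  (∀ i, 0 ≤ π i) ∧ ∑ i, π i = 1

/-- A `σ`-smooth vector: each entry is at most `σ`. -/
def IsSmooth {n : ℕ} (σ : ℝ) (π : Fin n → ℝ) : Prop :=
  ∀ i, π i ≤ σ

/-- The expected utility of a utility function `ui : [n]^k → ℝ` under the
product of the (mixed) strategies `π j`. -/
def expUtil {k n : ℕ} (ui : (Fin k → Fin n) → ℝ) (π : Fin k → Fin n → ℝ) : ℝ :=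
  ∑ a : Fin k → Fin n, (∏ j, π j (a j)) * ui a

/-- `π` is a `γ`-approximate (strong) `σ`-smooth Nash equilibrium of the
`k`-player `n`-action game `u`. -/
def IsApproxSmoothNE {k n : ℕ} (σ γ : ℝ) (u : Fin k → (Fin k → Fin n) → ℝ)
    (π : Fin k → Fin n → ℝ) : Prop :=
  (∀ j, IsStrategy (π j) ∧ IsSmooth σ (π j)) ∧
  ∀ (i : Fin k) (πi' : Fin n → ℝ), IsStrategy πi' → IsSmooth σ πi' →
    expUtil (u i) (Function.update π i πi') - expUtil (u i) π ≤ γ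

/-- Auxiliary: expected utility of the indicator of a product event factorizes. -/
theorem aux_expUtil_prod {k n : ℕ} (s : Fin k → Finset (Fin n)) (π : Fin k → Fin n → ℝ) :
    ∑ a : Fin k → Fin n, (∏ j, π j (a j)) * (if (∀ j, a j ∈ s j) then (1:ℝ) else 0)
      = ∏ j, ∑ x ∈ s j, π j x := by
  have h : ∀ a : Fin k → Fin n, (∏ j, π j (a j)) * (if (∀ j, a j ∈ s j) then (1:ℝ) else 0)
      = ∏ j, (if a j ∈ s j then π j (a j) else 0) := by
    intro a
    by_cases h : ∀ j, a j ∈ s j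
    · simp [h]
    · push_neg at h
      obtain ⟨j, hj⟩ := h
      rw [if_neg (by push_neg; exact ⟨j, hj⟩), mul_zero]
      exact (Finset.prod_eq_zero (mem_univ j) (by simp [hj])).symm
  simp_rw [h]
  have h2 : ∀ j ∈ (univ : Finset (Fin k)), ∑ x ∈ s j, π j x
      = ∑ x ∈ (univ : Finset (Fin n)), if x ∈ s j then π j x else 0 := by
    intro j _; simp [Finset.sum_ite_mem]
  rw [Finset.prod_congr rfl h2, Finset.prod_univ_sum, Fintype.piFinset_univ]

/-- The hard instance for the lower bound: player `i*` gets utility 1 iff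
every player `j` plays inside `s j`, all other players get 0. If player `i*`
plays uniformly on a set `R` disjoint from `s i*` and each other player `j`
plays uniformly on `s j`, the profile is `σ`-smooth, everyone's expected
utility is 0, yet deviating to the uniform distribution on `s i*` (a
`σ`-smooth strategy) gives player `i*` expected utility 1. Hence the profile
is not a `γ`-approximate `σ`-smooth Nash equilibrium for any `γ < 1`. -/
theorem hidden_game_not_smooth_NE
    (k n : ℕ) (hk : 2 ≤ k) (hn : 2 ≤ n)
    (σ : ℝ) (hσ1 : 2 / (n : ℝ) ≤ σ) (hσ2 : σ ≤ 1)
    (m : ℕ) (hm : 1 ≤ m) (hσm : (m : ℝ) = 1 / σ)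
    (istar : Fin k)
    (s : Fin k → Finset (Fin n)) (hs : ∀ j, (s j).card = m)
    (R : Finset (Fin n)) (hR : R.card = m) (hRs : Disjoint R (s istar))
    (u : Fin k → (Fin k → Fin n) → ℝ)
    (hu : ∀ i a, u i a =
      if i = istar ∧ (∀ j, a j ∈ s j) then 1 else 0)
    (π : Fin k → Fin n → ℝ)
    (hπ : ∀ j x, π j x =
      if j = istar then (if x ∈ R then σ else 0)
      else (if x ∈ s j then σ else 0)) :
    (∀ j, IsStrategy (π j) ∧ IsSmooth σ (π j)) ∧
    (∀ i, expUtil (u i) π = 0) ∧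
    (IsStrategy (fun x : Fin n => if x ∈ s istar then σ else 0) ∧
      IsSmooth σ (fun x : Fin n => if x ∈ s istar then σ else 0) ∧
      expUtil (u istar)
        (Function.update π istar
          (fun x : Fin n => if x ∈ s istar then σ else 0)) = 1) ∧
    (∀ γ : ℝ, γ < 1 → ¬ IsApproxSmoothNE σ γ u π) := by
  have hnpos : (0:ℝ) < n := by positivity
  have hσpos : 0 < σ := lt_of_lt_of_le (by positivity) hσ1
  have hmσ : (m : ℝ) * σ = 1 := by rw [hσm]; field_simp
  -- a uniform distribution on a set of size m is a σ-smooth strategy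
  have hunif : ∀ T : Finset (Fin n), T.card = m →
      IsStrategy (fun x => if x ∈ T then σ else 0) ∧
      IsSmooth σ (fun x => if x ∈ T then σ else 0) := by
    intro T hT
    refine ⟨⟨fun x => by dsimp; split <;> [exact hσpos.le; exact le_rfl], ?_⟩,
      fun x => by dsimp; split <;> [exact le_rfl; exact hσpos.le]⟩
    have : ∑ x : Fin n, (if x ∈ T then σ else 0) = ∑ x ∈ T, σ := by
      simp [Finset.sum_ite_mem]
    rw [this, Finset.sum_const, nsmul_eq_mul, hT, hmσ]
  -- the profile π consists of σ-smooth strategies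
  have hπstrat : ∀ j, IsStrategy (π j) ∧ IsSmooth σ (π j) := by
    intro j
    by_cases hj : j = istar
    · have hπj : π j = fun x => if x ∈ R then σ else 0 := funext fun x => by
        rw [hπ]; simp [hj]
      rw [hπj]; exact hunif R hR
    · have hπj : π j = fun x => if x ∈ s j then σ else 0 := funext fun x => by
        rw [hπ]; simp [hj]
      rw [hπj]; exact hunif (s j) (hs j)
  -- expected utility of every player under π is 0
  have hexp0 : ∀ i, expUtil (u i) π = 0 := by
    intro i
    by_cases hi : i = istar
    · subst hi
      have hui : u i = fun a => if (∀ j, a j ∈ s j) then (1:ℝ) else 0 :=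
        funext fun a => by rw [hu]; simp
      rw [expUtil, hui, aux_expUtil_prod]
      refine Finset.prod_eq_zero (mem_univ i) ?_
      refine Finset.sum_eq_zero fun x hx => ?_
      rw [hπ]
      simp [Finset.disjoint_right.mp hRs hx]
    · have hui : u i = fun _ => (0:ℝ) := funext fun a => by rw [hu]; simp [hi]
      rw [expUtil, hui]; simp
  -- the deviation gives expected utility 1
  have hdev := hunif (s istar) (hs istar)
  have hdevexp : expUtil (u istar)
      (Function.update π istar (fun x : Fin n => if x ∈ s istar then σ else 0)) = 1 := by
    set π' := Function.update π istar (fun x : Fin n => if x ∈ s istar then σ else 0) with hπ'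
    have hprof : ∀ j x, π' j x = if x ∈ s j then σ else 0 := by
      intro j x
      by_cases hj : j = istar
      · subst hj; rw [hπ', Function.update_self]
      · rw [hπ', Function.update_of_ne hj, hπ]; simp [hj]
    have hui : u istar = fun a => if (∀ j, a j ∈ s j) then (1:ℝ) else 0 :=
      funext fun a => by rw [hu]; simp
    rw [expUtil, hui, aux_expUtil_prod]
    have : ∀ j ∈ (univ : Finset (Fin k)), ∑ x ∈ s j, π' j x = 1 := by
      intro j _
      have : ∑ x ∈ s j, π' j x = ∑ x ∈ s j, σ :=
        Finset.sum_congr rfl fun x hx => by rw [hprof]; simp [hx]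
      rw [this, Finset.sum_const, nsmul_eq_mul, hs j, hmσ]
    rw [Finset.prod_congr rfl this, Finset.prod_const_one]
  refine ⟨hπstrat, hexp0, ⟨hdev.1, hdev.2, hdevexp⟩, ?_⟩
  intro γ hγ hNE
  have := hNE.2 istar (fun x : Fin n => if x ∈ s istar then σ else 0) hdev.1 hdev.2
  rw [hdevexp, hexp0 istar] at this
  linarith
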